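/- arXiv:1905.03579 — 2 statements merged into one kernel-verified Lean document; each statement's English description precedes it below -/
import Mathlib

section
/- Let J and K be disjoint nonempty subsets of {1,…,N}. Then P(K ⊆ φ) · P(J ⊆ φᶜ) ≤ P(K ⊆ φ and J ⊆ φᶜ); that is, (Σ_{|S| = p, K ⊆ S} det(Z_S)²) · (Σ_{|S| = p, S ∩ J = ∅} det(Z_S)²) ≤ Σ_{|S| = p, K ⊆ S, S ∩ J = ∅} det(Z_S)². Equivalently, when P(J ⊆ φᶜ) > 0, P(K ⊆ φ) ≤ P(K ⊆ φ | J ⊆ φᶜ). -/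
open Matrix

/-- Squared determinant of the submatrix of `Z` formed by the columns indexed by `S`,
when `S` has exactly `q` elements; `0` otherwise. -/
noncomputable def detSq {q N : ℕ} (Z : Matrix (Fin q) (Fin N) ℝ) (S : Finset (Fin N)) : ℝ :=
  if h : S.card = q then
    (Matrix.det (Matrix.of fun i j : Fin q => Z i ((S.orderIsoOfFin h j : Fin N)))) ^ 2
  else 0

open scoped Classical in
/-- `prDP Z E` is the probability that the determinantal process associated to the
matrix `Z` (with orthonormal rows) belongs to the family `E` of subsets of `{1,…,N}`:
`P(φ(Z) ∈ E) = Σ_{|S| = q, S ∈ E} det(Z_S)²`. -/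
noncomputable def prDP {q N : ℕ} (Z : Matrix (Fin q) (Fin N) ℝ)
    (E : Set (Finset (Fin N))) : ℝ :=
  ∑ S : Finset (Fin N), if S ∈ E then detSq Z S else 0


open Finset


noncomputable def colsDet {p N : ℕ} (Z : Matrix (Fin p) (Fin N) ℝ) (S : Finset (Fin N)) : ℝ :=
  if h : S.card = p then
    (Matrix.det (Matrix.of fun i j : Fin p => Z i ((S.orderIsoOfFin h j : Fin N)))) else 0

theorem det_mul_transpose_cb {p N : ℕ} (A B : Matrix (Fin p) (Fin N) ℝ) :
    (A * Bᵀ).det = ∑ S : Finset (Fin N), colsDet A S * colsDet B S := by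
  classical
  -- expansion over functions r : Fin p → Fin N
  have h1 : (A * Bᵀ).det
      = ∑ r : Fin p → Fin N, (∏ i, A i (r i)) * (Bᵀ.submatrix r id).det := by
    have hAB : (A * Bᵀ) = Matrix.of fun i => ∑ j, A i j • (Bᵀ j) := by
      ext i i'
      simp [Matrix.mul_apply, Matrix.transpose_apply, Finset.sum_apply]
    rw [hAB]
    have : Matrix.det (Matrix.of fun i => ∑ j, A i j • (Bᵀ j))
        = Matrix.detRowAlternating (fun i => ∑ j, A i j • (Bᵀ j)) := rfl
    rw [this]
    rw [show (Matrix.detRowAlternating (fun i => ∑ j, A i j • (Bᵀ j)))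
        = (Matrix.detRowAlternating (R := ℝ) (n := Fin p)).toMultilinearMap
            (fun i => ∑ j, (fun (i : Fin p) (j : Fin N) => A i j • (Bᵀ j)) i j) from rfl]
    rw [MultilinearMap.map_sum]
    refine Finset.sum_congr rfl fun r _ => ?_
    have := MultilinearMap.map_smul_univ
      (Matrix.detRowAlternating (R := ℝ) (n := Fin p)).toMultilinearMap
      (fun i => A i (r i)) (fun i => Bᵀ (r i))
    rw [show (Bᵀ.submatrix r id).det = Matrix.detRowAlternating (fun i => Bᵀ (r i)) from rfl]
    simpa using this
  rw [h1]
  -- non-injective r contribute 0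
  have h2 : ∀ r : Fin p → Fin N, ¬ Function.Injective r → (Bᵀ.submatrix r id).det = 0 := by
    intro r hr
    obtain ⟨a, b, hab, hne⟩ := Function.not_injective_iff.mp hr
    exact Matrix.det_zero_of_row_eq hne (by ext j; simp [Matrix.submatrix_apply, hab])
  -- restrict to injective
  rw [← Finset.sum_filter_of_ne (p := fun r : Fin p → Fin N => Function.Injective r)
      (fun r _ hne => by
        by_contra hno
        exact hne (by rw [h2 r hno, mul_zero]))]
  -- RHS : restrict to card = p
  rw [show (∑ S : Finset (Fin N), colsDet A S * colsDet B S)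
      = ∑ S ∈ Finset.univ.filter (fun S : Finset (Fin N) => S.card = p),
          colsDet A S * colsDet B S from
    (Finset.sum_subset (Finset.filter_subset _ _) (fun S _ hS => by
      rw [Finset.mem_filter, not_and] at hS
      have : ¬ S.card = p := hS (Finset.mem_univ S)
      simp [colsDet, this])).symm]
  -- fiberwise over the image
  rw [← Finset.sum_fiberwise_of_maps_to
      (g := fun r : Fin p → Fin N => Finset.image r Finset.univ)
      (t := Finset.univ.filter (fun S : Finset (Fin N) => S.card = p))
      (fun r hr => by
        rw [Finset.mem_filter] at hr ⊢
        exact ⟨Finset.mem_univ _, by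
          rw [Finset.card_image_of_injective _ hr.2, Finset.card_univ, Fintype.card_fin]⟩)]
  refine Finset.sum_congr rfl fun S hS => ?_
  rw [Finset.mem_filter] at hS
  have hcard : S.card = p := hS.2
  set e : Fin p → Fin N := fun j => ((S.orderIsoOfFin hcard j : Fin N)) with he
  have hemem : ∀ j, e j ∈ S := fun j => (S.orderIsoOfFin hcard j).2
  have heinj : Function.Injective e :=
    fun a b hab => (S.orderIsoOfFin hcard).injective (Subtype.ext hab)
  -- inner sum over r with image S ↔ sum over permutations
  have hinner : ∑ r ∈ (Finset.univ.filter fun r : Fin p → Fin N => Function.Injective r).filter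
        (fun r => Finset.image r Finset.univ = S),
        (∏ i, A i (r i)) * (Bᵀ.submatrix r id).det
      = ∑ σ : Equiv.Perm (Fin p),
        (∏ i, A i (e (σ i))) * (Bᵀ.submatrix (fun i => e (σ i)) id).det := by
    refine (Finset.sum_bij (i := fun (σ : Equiv.Perm (Fin p)) _ => fun j => e (σ j))
      ?_ ?_ ?_ ?_).symm
    · -- maps to
      intro σ _
      rw [Finset.mem_filter, Finset.mem_filter]
      refine ⟨⟨Finset.mem_univ _, heinj.comp σ.injective⟩, ?_⟩
      -- image (e ∘ σ) univ = S
      apply Finset.eq_of_subset_of_card_le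
      · intro x hx
        rw [Finset.mem_image] at hx
        obtain ⟨a, _, rfl⟩ := hx
        exact hemem _
      · have : Function.Injective ((fun σ (x : σ ∈ (univ : Finset (Equiv.Perm (Fin p)))) (j : Fin p) => e (σ j)) σ (Finset.mem_univ σ)) := heinj.comp σ.injective
        rw [hcard, Finset.card_image_of_injective _ this, Finset.card_univ, Fintype.card_fin]
    · -- injective
      intro σ _ σ' _ h
      exact Equiv.ext fun j => heinj (congrFun h j)
    · -- surjective
      intro r hr
      rw [Finset.mem_filter, Finset.mem_filter] at hr
      obtain ⟨⟨_, hrinj⟩, hrim⟩ := hr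
      have hmem : ∀ l, r l ∈ S := fun l => by
        rw [← hrim]; exact Finset.mem_image_of_mem r (Finset.mem_univ l)
      have ginj : Function.Injective
          (fun l => (S.orderIsoOfFin hcard).symm ⟨r l, hmem l⟩) := by
        intro a b hab
        apply hrinj
        have := congrArg (fun x => ((S.orderIsoOfFin hcard) x : Fin N)) hab
        simpa using this
      refine ⟨Equiv.ofBijective _ ((Finite.injective_iff_bijective).mp ginj),
        Finset.mem_univ _, ?_⟩
      funext j
      show e ((S.orderIsoOfFin hcard).symm ⟨r j, hmem j⟩) = r j
      rw [he]
      simp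
    · exact fun σ _ => rfl
  rw [hinner]
  have hBrow : ∀ σ : Equiv.Perm (Fin p), (Bᵀ.submatrix (fun i => e (σ i)) id).det
      = ((Equiv.Perm.sign σ : ℤ) : ℝ) * (Matrix.of fun i j : Fin p => B i (e j)).det := by
    intro σ
    have h3 : Bᵀ.submatrix (fun i => e (σ i)) id = (Bᵀ.submatrix e id).submatrix σ id := rfl
    rw [h3, Matrix.det_permute]
    congr 1
    have h4 : Bᵀ.submatrix e id = (B.submatrix id e)ᵀ := by
      ext i j; simp [Matrix.submatrix_apply, Matrix.transpose_apply]
    rw [h4, Matrix.det_transpose]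
    rfl
  have hAdet : ∑ σ : Equiv.Perm (Fin p),
      ((Equiv.Perm.sign σ : ℤ) : ℝ) * ∏ i, A i (e (σ i))
      = (Matrix.of fun i j : Fin p => A i (e j)).det := by
    rw [Matrix.det_apply]
    refine Fintype.sum_equiv (Equiv.inv (Equiv.Perm (Fin p))) _ _ fun σ => ?_
    have hprod : ∏ i, A i (e (σ i)) = ∏ i, A (σ⁻¹ i) (e i) := by
      have := Equiv.prod_comp σ (fun i => A (σ⁻¹ i) (e i))
      rw [← this]
      exact Finset.prod_congr rfl fun i _ => by simp
    rw [hprod]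
    simp [Units.smul_def, zsmul_eq_mul, Equiv.Perm.sign_inv]
  calc ∑ σ : Equiv.Perm (Fin p),
        (∏ i, A i (e (σ i))) * (Bᵀ.submatrix (fun i => e (σ i)) id).det
      = (∑ σ : Equiv.Perm (Fin p), ((Equiv.Perm.sign σ : ℤ) : ℝ) * ∏ i, A i (e (σ i)))
          * (Matrix.of fun i j : Fin p => B i (e j)).det := by
        rw [Finset.sum_mul]
        exact Finset.sum_congr rfl fun σ _ => by rw [hBrow σ]; ring
    _ = colsDet A S * colsDet B S := by
        rw [hAdet, colsDet, colsDet, dif_pos hcard, dif_pos hcard]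

theorem detSq_eq_sq {p N : ℕ} (Z : Matrix (Fin p) (Fin N) ℝ) (S : Finset (Fin N)) :
    detSq Z S = colsDet Z S ^ 2 := by
  unfold detSq colsDet
  split_ifs with h
  · rfl
  · ring

theorem detSq_nonneg {p N : ℕ} (Z : Matrix (Fin p) (Fin N) ℝ) (S : Finset (Fin N)) :
    0 ≤ detSq Z S := by rw [detSq_eq_sq]; positivity

theorem det_weighted {p N : ℕ} (Z : Matrix (Fin p) (Fin N) ℝ) (x : Fin N → ℝ) :
    (Z * Matrix.diagonal x * Zᵀ).det
      = ∑ S : Finset (Fin N), detSq Z S * ∏ i ∈ S, x i := by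
  rw [det_mul_transpose_cb]
  refine Finset.sum_congr rfl fun S _ => ?_
  by_cases h : S.card = p
  · have hsub : (Matrix.of fun i j : Fin p => (Z * Matrix.diagonal x) i ((S.orderIsoOfFin h j : Fin N)))
        = (Matrix.of fun i j : Fin p => Z i ((S.orderIsoOfFin h j : Fin N)))
          * Matrix.diagonal (fun j : Fin p => x ((S.orderIsoOfFin h j : Fin N))) := by
      ext i j
      simp [Matrix.mul_diagonal]
    have hprod : ∏ j : Fin p, x ((S.orderIsoOfFin h j : Fin N)) = ∏ i ∈ S, x i := by
      rw [← Finset.prod_coe_sort S x]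
      exact Equiv.prod_comp (S.orderIsoOfFin h).toEquiv (fun i => x ↑i)
    rw [detSq_eq_sq, colsDet, colsDet, dif_pos h, dif_pos h, hsub, Matrix.det_mul,
      Matrix.det_diagonal, hprod]
    ring
  · simp [colsDet, detSq, h]


open scoped MatrixOrder in
theorem psd_det_nonneg {n : Type*} [Fintype n] [DecidableEq n]
    {A : Matrix n n ℝ} (hA : A.PosSemidef) : 0 ≤ A.det := by
  have hss : CFC.sqrt A * CFC.sqrt A = A := CFC.sqrt_mul_sqrt_self A hA.nonneg
  calc (0:ℝ) ≤ (CFC.sqrt A).det ^ 2 := sq_nonneg _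
    _ = A.det := by rw [sq, ← Matrix.det_mul, hss]


theorem conjT_real {m n : Type*} (A : Matrix m n ℝ) : Aᴴ = Aᵀ := by
  ext i j; simp [Matrix.conjTranspose_apply]

theorem det_one_add_psd {n : Type*} [Fintype n] [DecidableEq n]
    {F : Matrix n n ℝ} (hF : F.PosSemidef) : 1 ≤ (1 + F).det := by
  have hH := hF.1
  have hsp := hH.spectral_theorem
  set V : Matrix n n ℝ := (hH.eigenvectorUnitary : Matrix n n ℝ) with hV
  have hVs : V * star V = 1 := by
    exact Matrix.mem_unitaryGroup_iff.mp hH.eigenvectorUnitary.2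
  have hone : (1 : Matrix n n ℝ) + F
      = V * ((1 : Matrix n n ℝ) + (Matrix.diagonal (RCLike.ofReal ∘ hH.eigenvalues) : Matrix n n ℝ)) * star V := by
    rw [Matrix.mul_add, Matrix.add_mul, Matrix.mul_one, hVs]
    exact congrArg (1 + ·) (hsp.trans (by rw [Unitary.conjStarAlgAut_apply]))
  rw [hone, Matrix.det_mul, Matrix.det_mul]
  have hdetV : V.det * (star V).det = 1 := by
    rw [← Matrix.det_mul, hVs, Matrix.det_one]
  have hdiag : ((1 : Matrix n n ℝ) + (Matrix.diagonal (RCLike.ofReal ∘ hH.eigenvalues) : Matrix n n ℝ)).det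
      = ∏ i, (1 + hH.eigenvalues i) := by
    rw [← Matrix.diagonal_one, Matrix.diagonal_add, Matrix.det_diagonal]
    simp [Function.comp]
  calc (1:ℝ) = V.det * 1 * (star V).det := by rw [mul_one, hdetV]
    _ ≤ V.det * ((1 : Matrix n n ℝ) + (Matrix.diagonal (RCLike.ofReal ∘ hH.eigenvalues) : Matrix n n ℝ)).det * (star V).det := ?_
    _ = _ := rfl
  · rcases le_or_gt 0 (V.det * (star V).det) with hnn | hneg
    · have h1 : (1:ℝ) ≤ ((1 : Matrix n n ℝ) + (Matrix.diagonal (RCLike.ofReal ∘ hH.eigenvalues) : Matrix n n ℝ)).det := by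
        rw [hdiag]
        calc (1:ℝ) = ∏ _i : n, 1 := by rw [Finset.prod_const_one]
          _ ≤ ∏ i, (1 + hH.eigenvalues i) := by
            refine Finset.prod_le_prod (fun _ _ => zero_le_one) (fun i _ => ?_)
            have := hF.eigenvalues_nonneg i
            linarith [this]
      nlinarith [hdetV, h1]
    · nlinarith [hdetV]

open scoped MatrixOrder in
theorem det_le_det_add_psd {n : Type*} [Fintype n] [DecidableEq n]
    {A E : Matrix n n ℝ} (hA : A.PosSemidef) (hE : E.PosSemidef) :
    A.det ≤ (A + E).det := by
  by_cases hd : A.det = 0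
  · rw [hd]
    have hAE := hA.add hE
    have hss : CFC.sqrt (A + E) * CFC.sqrt (A + E) = A + E := CFC.sqrt_mul_sqrt_self (A + E) hAE.nonneg
    calc (0:ℝ) ≤ (CFC.sqrt (A + E)).det ^ 2 := sq_nonneg _
      _ = (A + E).det := by rw [sq, ← Matrix.det_mul, hss]
  · have hS := (CFC.sqrt_nonneg A).posSemidef
    set S := CFC.sqrt A with hSdef
    have hSS : S * S = A := CFC.sqrt_mul_sqrt_self A hA.nonneg
    have hSdet : S.det ≠ 0 := by
      intro h0
      apply hd
      rw [← hSS, Matrix.det_mul, h0, mul_zero]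
    have hSunit : IsUnit S.det := isUnit_iff_ne_zero.mpr hSdet
    have hSinv : S * S⁻¹ = 1 := Matrix.mul_nonsing_inv _ hSunit
    have hSinv' : S⁻¹ * S = 1 := Matrix.nonsing_inv_mul _ hSunit
    have hE' : (S⁻¹ * E * (S⁻¹)ᵀ).PosSemidef := by
      have := hE.mul_mul_conjTranspose_same S⁻¹
      rwa [conjT_real] at this
    have hfact : A + E = S * (1 + S⁻¹ * E * (S⁻¹)ᵀ) * S := by
      have hTS : Sᵀ = S := by rw [← conjT_real S]; exact hS.1
      have hsym : (S⁻¹)ᵀ = S⁻¹ := by rw [Matrix.transpose_nonsing_inv, hTS]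
      rw [hsym, Matrix.mul_add, Matrix.add_mul, Matrix.mul_one, hSS]
      congr 1
      refine (?_ : S * (S⁻¹ * E * S⁻¹) * S = E).symm
      calc S * (S⁻¹ * E * S⁻¹) * S
          = (S * S⁻¹) * E * (S⁻¹ * S) := by
            simp only [Matrix.mul_assoc]
        _ = E := by rw [hSinv, hSinv', Matrix.mul_one, Matrix.one_mul]
    rw [hfact, Matrix.det_mul, Matrix.det_mul]
    have h1 : 1 ≤ (1 + S⁻¹ * E * (S⁻¹)ᵀ).det := det_one_add_psd hE'
    have hA' : A.det = S.det * S.det := by rw [← hSS, Matrix.det_mul]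
    nlinarith [hA', h1, sq_nonneg S.det]

set_option maxHeartbeats 1000000 in
/-- inequality (4) of Proposition 1: for disjoint nonempty J, K,
P(K ⊆ φ) · P(J ⊆ φᶜ) ≤ P(K ⊆ φ and J ⊆ φᶜ), i.e. conditioning on J ⊆ φᶜ increases the
probability that K ⊆ φ. -/
theorem conditioning_on_avoid_increases {N p : ℕ} (hp : 1 < p) (hpN : p < N)
    (Z : Matrix (Fin p) (Fin N) ℝ) (hZ : Z * Zᵀ = 1)
    (J K : Finset (Fin N)) (hJ : J.Nonempty) (hK : K.Nonempty) (hJK : Disjoint J K) :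
    prDP Z {S | K ⊆ S} * prDP Z {S | Disjoint S J}
      ≤ prDP Z {S | K ⊆ S ∧ Disjoint S J} := by
  classical
  set dJ : Fin N → ℝ := fun i => if i ∈ J then 0 else 1 with hdJ
  set dK : Fin N → ℝ := fun i => if i ∈ K then 1 else 0 with hdK
  set M : Matrix (Fin p) (Fin p) ℝ := Z * Matrix.diagonal dJ * Zᵀ with hM
  set U : Matrix (Fin p) {i // i ∈ K} ℝ := Matrix.of fun a j => Z a ↑j with hU
  set k := K.card with hk
  -- total mass 1
  have hsum1 : ∑ S : Finset (Fin N), detSq Z S = 1 := by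
    have h := det_weighted Z (fun _ => 1)
    rw [show Matrix.diagonal (fun _ : Fin N => (1:ℝ)) = 1 from Matrix.diagonal_one] at h
    rw [Matrix.mul_one, hZ, Matrix.det_one] at h
    simpa using h.symm
  -- P(J ⊆ φᶜ) = det M
  have hPJ : prDP Z {S | Disjoint S J} = M.det := by
    unfold prDP
    rw [hM, det_weighted]
    refine Finset.sum_congr rfl fun S _ => ?_
    by_cases h : Disjoint S J
    · have hone : ∏ i ∈ S, dJ i = 1 := Finset.prod_eq_one fun i hi => by
        have hiJ : i ∉ J := (Finset.disjoint_left.mp h) hi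
        simp [hdJ, hiJ]
      simp [Set.mem_setOf_eq, h, hone]
    · obtain ⟨i, hiS, hiJ⟩ := Finset.not_disjoint_iff.mp h
      have hzero : ∏ i ∈ S, dJ i = 0 := Finset.prod_eq_zero hiS (by simp [hdJ, hiJ])
      simp [Set.mem_setOf_eq, h, hzero]
  have hPK : prDP Z {S | K ⊆ S}
      = ∑ S : Finset (Fin N), (if K ⊆ S then detSq Z S else 0) := by
    unfold prDP
    exact Finset.sum_congr rfl fun S _ => by by_cases h : K ⊆ S <;> simp [h]
  have hPT : prDP Z {S | K ⊆ S ∧ Disjoint S J}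
      = ∑ S : Finset (Fin N), (if K ⊆ S ∧ Disjoint S J then detSq Z S else 0) := by
    unfold prDP
    exact Finset.sum_congr rfl fun S _ => by
      by_cases h : K ⊆ S ∧ Disjoint S J <;> simp [h, Set.mem_setOf_eq]
  -- M is psd
  set C : Matrix (Fin p) (Fin N) ℝ := Z * Matrix.diagonal dJ with hC
  have hdJ2 : (fun i => dJ i * dJ i) = dJ := by
    funext i; by_cases hi : i ∈ J <;> simp [hdJ, hi]
  have hDD : Matrix.diagonal dJ * Matrix.diagonal dJ = Matrix.diagonal dJ := by
    rw [Matrix.diagonal_mul_diagonal]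
    exact congrArg Matrix.diagonal hdJ2
  have hMC : M = C * Cᵀ := by
    rw [hM, hC, Matrix.transpose_mul, Matrix.diagonal_transpose]
    calc Z * Matrix.diagonal dJ * Zᵀ
        = Z * (Matrix.diagonal dJ * Matrix.diagonal dJ) * Zᵀ := by rw [hDD]
      _ = Z * Matrix.diagonal dJ * (Matrix.diagonal dJ * Zᵀ) := by
          simp only [Matrix.mul_assoc]
  have hMpsd : M.PosSemidef := by
    rw [hMC]
    have := Matrix.posSemidef_self_mul_conjTranspose C
    rwa [conjT_real] at this
  have hMdet_nonneg : (0:ℝ) ≤ M.det := psd_det_nonneg hMpsd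
  have hT_nonneg : 0 ≤ prDP Z {S | K ⊆ S ∧ Disjoint S J} := by
    rw [hPT]
    exact Finset.sum_nonneg fun S _ => by
      by_cases h : K ⊆ S ∧ Disjoint S J <;> simp [h, detSq_nonneg]
  have hPK_nonneg : 0 ≤ prDP Z {S | K ⊆ S} := by
    rw [hPK]
    exact Finset.sum_nonneg fun S _ => by
      by_cases h : K ⊆ S <;> simp [h, detSq_nonneg]
  rcases eq_or_ne M.det 0 with hMdet | hMdet
  · rw [hPJ, hMdet, mul_zero]
    exact hT_nonneg
  have hMunit : IsUnit M.det := isUnit_iff_ne_zero.mpr hMdet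
  have hMMinv : M * M⁻¹ = 1 := Matrix.mul_nonsing_inv _ hMunit
  have hMT : Mᵀ = M := by rw [← conjT_real]; exact hMpsd.1
  -- U * Uᵀ = Z * diagonal dK * Zᵀ
  have hGK : Z * Matrix.diagonal dK * Zᵀ = U * Uᵀ := by
    ext a b
    have hZD : (Z * Matrix.diagonal dK) = Matrix.of fun a j => Z a j * dK j := by
      ext a' j'; rw [Matrix.mul_diagonal]; rfl
    have h1 : (Z * Matrix.diagonal dK * Zᵀ) a b = ∑ j, Z a j * dK j * Z b j := by
      simp [hZD, Matrix.mul_apply, Matrix.transpose_apply]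
    have h2 : (U * Uᵀ) a b = ∑ j : {i // i ∈ K}, Z a ↑j * Z b ↑j := by
      simp [hU, Matrix.mul_apply, Matrix.transpose_apply]
    rw [h1, h2, Finset.sum_coe_sort K (fun j => Z a j * Z b j)]
    rw [show ∑ j ∈ K, Z a j * Z b j
        = ∑ j, (if j ∈ K then Z a j * Z b j else 0) by
      rw [Finset.sum_ite_mem, Finset.univ_inter]]
    refine Finset.sum_congr rfl fun j _ => ?_
    by_cases hj : j ∈ K <;> simp [hdK, hj]
  -- projection inequality
  have hnormZ : ∀ u : Fin N → ℝ, (Z *ᵥ u) ⬝ᵥ (Z *ᵥ u) ≤ u ⬝ᵥ u := by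
    intro u
    set P : Matrix (Fin N) (Fin N) ℝ := Zᵀ * Z with hPdef
    have hPsymm : Pᵀ = P := by
      rw [hPdef, Matrix.transpose_mul, Matrix.transpose_transpose]
    have hPP : P * P = P := by
      rw [hPdef]
      calc Zᵀ * Z * (Zᵀ * Z) = Zᵀ * (Z * Zᵀ) * Z := by simp only [Matrix.mul_assoc]
        _ = Zᵀ * Z := by rw [hZ, Matrix.mul_one]
    have hvm : ∀ x : Fin p → ℝ, x ᵥ* Z = Zᵀ *ᵥ x := by
      intro x
      calc x ᵥ* Z = x ᵥ* (Zᵀ)ᵀ := by rw [Matrix.transpose_transpose]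
        _ = Zᵀ *ᵥ x := Matrix.vecMul_transpose _ _
    have hvmP : ∀ x : Fin N → ℝ, x ᵥ* P = P *ᵥ x := by
      intro x
      calc x ᵥ* P = x ᵥ* (Pᵀ)ᵀ := by rw [Matrix.transpose_transpose]
        _ = Pᵀ *ᵥ x := Matrix.vecMul_transpose _ _
        _ = P *ᵥ x := by rw [hPsymm]
    have h1 : (Z *ᵥ u) ⬝ᵥ (Z *ᵥ u) = u ⬝ᵥ (P *ᵥ u) := by
      rw [Matrix.dotProduct_mulVec, hvm, Matrix.mulVec_mulVec, ← hPdef,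
        dotProduct_comm]
    have hPuPu : (P *ᵥ u) ⬝ᵥ (P *ᵥ u) = u ⬝ᵥ (P *ᵥ u) := by
      rw [Matrix.dotProduct_mulVec, hvmP, Matrix.mulVec_mulVec, hPP,
        dotProduct_comm]
    have hdd : 0 ≤ (u - P *ᵥ u) ⬝ᵥ (u - P *ᵥ u) := by
      refine Finset.sum_nonneg fun i _ => mul_self_nonneg _
    have hexpand : (u - P *ᵥ u) ⬝ᵥ (u - P *ᵥ u)
        = u ⬝ᵥ u - u ⬝ᵥ (P *ᵥ u) - ((P *ᵥ u) ⬝ᵥ u - (P *ᵥ u) ⬝ᵥ (P *ᵥ u)) := by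
      rw [sub_dotProduct, dotProduct_sub, dotProduct_sub]
    have hcomm : (P *ᵥ u) ⬝ᵥ u = u ⬝ᵥ (P *ᵥ u) := dotProduct_comm _ _
    linarith [h1, hPuPu, hdd, hexpand.symm.le, hexpand.le]
  -- diagonal contraction
  have hDnorm : ∀ u : Fin N → ℝ,
      (Matrix.diagonal dJ *ᵥ u) ⬝ᵥ (Matrix.diagonal dJ *ᵥ u) ≤ u ⬝ᵥ u := by
    intro u
    have hdv : ∀ i, (Matrix.diagonal dJ *ᵥ u) i = dJ i * u i := by
      intro i; rw [Matrix.mulVec_diagonal]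
    calc (Matrix.diagonal dJ *ᵥ u) ⬝ᵥ (Matrix.diagonal dJ *ᵥ u)
        = ∑ i, (dJ i * u i) * (dJ i * u i) := by
          refine Finset.sum_congr rfl fun i _ => by rw [hdv]
      _ ≤ ∑ i, u i * u i := by
          refine Finset.sum_le_sum fun i _ => ?_
          by_cases hi : i ∈ J
          · simp [hdJ, hi, mul_self_nonneg]
          · simp [hdJ, hi]
      _ = u ⬝ᵥ u := rfl
  -- M - M*M is psd
  have hsub1 : (M - M * M).PosSemidef := by
    have hmid : ((1 : Matrix (Fin N) (Fin N) ℝ) - Cᵀ * C).PosSemidef := by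
      refine Matrix.PosSemidef.of_dotProduct_mulVec_nonneg ?_ ?_
      · show ((1 : Matrix (Fin N) (Fin N) ℝ) - Cᵀ * C)ᴴ = _
        rw [conjT_real, Matrix.transpose_sub, Matrix.transpose_one,
          Matrix.transpose_mul, Matrix.transpose_transpose]
      · intro x
        have hstar : (star x : Fin N → ℝ) = x := by
          funext i; simp
        rw [hstar]
        have hq : x ⬝ᵥ (((1 : Matrix (Fin N) (Fin N) ℝ) - Cᵀ * C) *ᵥ x)
            = x ⬝ᵥ x - (C *ᵥ x) ⬝ᵥ (C *ᵥ x) := by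
          rw [Matrix.sub_mulVec, dotProduct_sub, Matrix.one_mulVec]
          congr 1
          rw [← Matrix.mulVec_mulVec, Matrix.dotProduct_mulVec]
          congr 1
          exact Matrix.vecMul_transpose _ _
        rw [hq]
        have hCx : C *ᵥ x = Z *ᵥ (Matrix.diagonal dJ *ᵥ x) := by
          rw [Matrix.mulVec_mulVec, hC]
        have := hnormZ (Matrix.diagonal dJ *ᵥ x)
        have := hDnorm x
        rw [hCx]
        linarith
    have hrep : M - M * M = C * ((1 : Matrix (Fin N) (Fin N) ℝ) - Cᵀ * C) * Cᵀ := by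
      rw [hMC, Matrix.mul_sub, Matrix.sub_mul, Matrix.mul_one]
      congr 1
      simp only [Matrix.mul_assoc]
    rw [hrep]
    have := hmid.mul_mul_conjTranspose_same C
    rwa [conjT_real] at this
  -- R = M⁻¹ - 1 is psd
  have hMinvT : M⁻¹ᵀ = M⁻¹ := by rw [Matrix.transpose_nonsing_inv, hMT]
  have hR : ((M⁻¹ - 1 : Matrix (Fin p) (Fin p) ℝ)).PosSemidef := by
    refine Matrix.PosSemidef.of_dotProduct_mulVec_nonneg ?_ ?_
    · show ((M⁻¹ - 1 : Matrix (Fin p) (Fin p) ℝ))ᴴ = _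
      rw [conjT_real, Matrix.transpose_sub, Matrix.transpose_one, hMinvT]
    · intro v
      have hstar : (star v : Fin p → ℝ) = v := by funext i; simp
      rw [hstar]
      set w : Fin p → ℝ := M⁻¹ *ᵥ v with hw
      have hv : M *ᵥ w = v := by
        rw [hw, Matrix.mulVec_mulVec, hMMinv, Matrix.one_mulVec]
      have hvmM : ∀ x : Fin p → ℝ, x ᵥ* M = M *ᵥ x := by
        intro x
        calc x ᵥ* M = x ᵥ* (Mᵀ)ᵀ := by rw [Matrix.transpose_transpose]
          _ = Mᵀ *ᵥ x := Matrix.vecMul_transpose _ _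
          _ = M *ᵥ x := by rw [hMT]
      have h1 : v ⬝ᵥ w = w ⬝ᵥ (M *ᵥ w) := by
        conv_lhs => rw [← hv]
        exact dotProduct_comm _ _
      have h2 : v ⬝ᵥ v = w ⬝ᵥ ((M * M) *ᵥ w) := by
        conv_lhs => rw [← hv]
        rw [Matrix.dotProduct_mulVec, hvmM, Matrix.mulVec_mulVec,
          dotProduct_comm]
      have h3 : v ⬝ᵥ ((M⁻¹ - 1) *ᵥ v) = w ⬝ᵥ ((M - M * M) *ᵥ w) := by
        rw [Matrix.sub_mulVec, dotProduct_sub, Matrix.one_mulVec,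
          Matrix.sub_mulVec, dotProduct_sub, ← hw, h1, h2]
      rw [h3]
      have := hsub1.dotProduct_mulVec_nonneg w
      have hstarw : (star w : Fin p → ℝ) = w := by funext i; simp
      rwa [hstarw] at this
  -- B = Uᵀ M⁻¹ U
  set B : Matrix {i // i ∈ K} {i // i ∈ K} ℝ := Uᵀ * M⁻¹ * U with hB
  have hBsplit : B = Uᵀ * U + Uᵀ * (M⁻¹ - 1) * U := by
    rw [hB, Matrix.mul_sub, Matrix.sub_mul, Matrix.mul_one]
    abel
  have hUU_psd : (Uᵀ * U).PosSemidef := by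
    have := Matrix.posSemidef_conjTranspose_mul_self U
    rwa [conjT_real] at this
  have hE_psd : (Uᵀ * (M⁻¹ - 1) * U).PosSemidef := by
    have := hR.mul_mul_conjTranspose_same Uᵀ
    rwa [conjT_real, Matrix.transpose_transpose] at this
  have hdetB : (Uᵀ * U).det ≤ B.det := by
    rw [hBsplit]
    exact det_le_det_add_psd hUU_psd hE_psd
  -- Step (iv): P(K ⊆ φ) ≤ det (Uᵀ U)
  have hstep1 : ∀ t : ℝ, 0 < t →
      prDP Z {S | K ⊆ S} ≤ (t⁻¹ • (1 : Matrix {i // i ∈ K} {i // i ∈ K} ℝ) + Uᵀ * U).det := by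
    intro t ht
    have hdiagx : Matrix.diagonal (fun i : Fin N => 1 + t * dK i)
        = 1 + t • Matrix.diagonal dK := by
      ext i j
      by_cases hij : i = j
      · subst hij
        simp [Matrix.diagonal_apply_eq, Matrix.one_apply_eq]
      · simp [Matrix.diagonal_apply_ne _ hij, Matrix.one_apply_ne hij]
    have hid : Z * Matrix.diagonal (fun i : Fin N => 1 + t * dK i) * Zᵀ
        = 1 + t • (U * Uᵀ) := by
      rw [hdiagx, Matrix.mul_add, Matrix.add_mul, Matrix.mul_one, hZ,
        Matrix.mul_smul, Matrix.smul_mul, hGK]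
    have hdet1 : ((1 : Matrix (Fin p) (Fin p) ℝ) + t • (U * Uᵀ)).det
        = t ^ k * (t⁻¹ • (1 : Matrix {i // i ∈ K} {i // i ∈ K} ℝ) + Uᵀ * U).det := by
      have h1 : (1 : Matrix (Fin p) (Fin p) ℝ) + t • (U * Uᵀ) = 1 + U * (t • Uᵀ) := by
        rw [Matrix.mul_smul]
      rw [h1, Matrix.det_one_add_mul_comm, Matrix.smul_mul]
      have h2 : (1 : Matrix {i // i ∈ K} {i // i ∈ K} ℝ) + t • (Uᵀ * U)
          = t • (t⁻¹ • 1 + Uᵀ * U) := by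
        rw [smul_add, smul_smul, mul_inv_cancel₀ ht.ne', one_smul]
      rw [h2, Matrix.det_smul, Fintype.card_coe]
    have hterm : ∀ S : Finset (Fin N),
        (if K ⊆ S then detSq Z S else 0) * t ^ k
          ≤ detSq Z S * ∏ i ∈ S, (1 + t * dK i) := by
      intro S
      have hprodval : ∏ i ∈ S, (1 + t * dK i) = (1 + t) ^ (S ∩ K).card := by
        have hc : ∀ i ∈ S, (1 + t * dK i) = (if i ∈ K then (1+t) else 1) := fun i _ => by
          by_cases hik : i ∈ K <;> simp [hdK, hik]
        rw [Finset.prod_congr rfl hc, Finset.prod_ite_mem, Finset.prod_const]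
      rw [hprodval]
      by_cases hKS : K ⊆ S
      · rw [if_pos hKS, Finset.inter_eq_right.mpr hKS]
        exact mul_le_mul_of_nonneg_left (pow_le_pow_left₀ ht.le (by linarith) k)
          (detSq_nonneg Z S)
      · rw [if_neg hKS, zero_mul]
        exact mul_nonneg (detSq_nonneg Z S) (pow_nonneg (by linarith) _)
    have hA : prDP Z {S | K ⊆ S} * t ^ k
        ≤ t ^ k * (t⁻¹ • (1 : Matrix {i // i ∈ K} {i // i ∈ K} ℝ) + Uᵀ * U).det := by
      rw [hPK, Finset.sum_mul]
      calc ∑ S : Finset (Fin N), (if K ⊆ S then detSq Z S else 0) * t ^ k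
          ≤ ∑ S : Finset (Fin N), detSq Z S * ∏ i ∈ S, (1 + t * dK i) :=
            Finset.sum_le_sum fun S _ => hterm S
        _ = (Z * Matrix.diagonal (fun i : Fin N => 1 + t * dK i) * Zᵀ).det :=
            (det_weighted Z _).symm
        _ = ((1 : Matrix (Fin p) (Fin p) ℝ) + t • (U * Uᵀ)).det := by rw [hid]
        _ = t ^ k * _ := hdet1
    exact le_of_mul_le_mul_right (by linarith [hA]) (pow_pos ht k)
  have hlim1 : Filter.Tendsto
      (fun t : ℝ => (t⁻¹ • (1 : Matrix {i // i ∈ K} {i // i ∈ K} ℝ) + Uᵀ * U).det)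
      Filter.atTop (nhds ((Uᵀ * U).det)) := by
    have hc : Continuous fun c : ℝ =>
        ((c • (1 : Matrix {i // i ∈ K} {i // i ∈ K} ℝ) + Uᵀ * U)).det :=
      ((continuous_id.smul continuous_const).add continuous_const).matrix_det
    have h0 := (hc.tendsto 0).comp tendsto_inv_atTop_zero
    simpa [Function.comp_def] using h0
  have hPK_le : prDP Z {S | K ⊆ S} ≤ (Uᵀ * U).det :=
    ge_of_tendsto hlim1 (Filter.eventually_atTop.mpr
      ⟨1, fun t ht => hstep1 t (lt_of_lt_of_le zero_lt_one ht)⟩)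
  -- Step (v): det M * det B ≤ P(K ⊆ φ, J ⊆ φᶜ)
  have hk1 : 1 ≤ k := hK.card_pos
  obtain ⟨k', hk'⟩ : ∃ k', k = k' + 1 := ⟨k - 1, by omega⟩
  have hstep2 : ∀ t : ℝ, 0 < t →
      M.det * (t⁻¹ • (1 : Matrix {i // i ∈ K} {i // i ∈ K} ℝ) + B).det - ((1 + t⁻¹) ^ k - 1)
        ≤ prDP Z {S | K ⊆ S ∧ Disjoint S J} := by
    intro t ht
    have htpow : (0:ℝ) < t ^ k := pow_pos ht k
    have hpowle : t ^ k ≤ (1+t) ^ k := pow_le_pow_left₀ ht.le (by linarith) k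
    have hterm : ∀ S : Finset (Fin N),
        detSq Z S * ∏ i ∈ S, (dJ i + t * dK i)
          ≤ (if K ⊆ S ∧ Disjoint S J then detSq Z S else 0) * t ^ k
            + detSq Z S * ((1+t)^k - t^k) := by
      intro S
      by_cases hdisj : Disjoint S J
      · have hprodval : ∏ i ∈ S, (dJ i + t * dK i) = (1 + t) ^ (S ∩ K).card := by
          have hc : ∀ i ∈ S, (dJ i + t * dK i) = (if i ∈ K then (1+t) else 1) := by
            intro i hi
            have hiJ : i ∉ J := Finset.disjoint_left.mp hdisj hi
            by_cases hik : i ∈ K <;> simp [hdJ, hdK, hiJ, hik]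
          rw [Finset.prod_congr rfl hc, Finset.prod_ite_mem, Finset.prod_const]
        rw [hprodval]
        by_cases hKS : K ⊆ S
        · rw [if_pos ⟨hKS, hdisj⟩, Finset.inter_eq_right.mpr hKS]
          have heq : detSq Z S * (1+t) ^ k
              = detSq Z S * t ^ k + detSq Z S * ((1+t)^k - t^k) := by ring
          exact le_of_eq heq
        · rw [if_neg (fun hcon => hKS hcon.1), zero_mul, zero_add]
          refine mul_le_mul_of_nonneg_left ?_ (detSq_nonneg Z S)
          have hm : (S ∩ K).card ≤ k' := by
            have hne : S ∩ K ≠ K := fun h => hKS (Finset.inter_eq_right.mp h)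
            have hss : S ∩ K ⊂ K :=
              Finset.ssubset_iff_subset_ne.mpr ⟨Finset.inter_subset_right, hne⟩
            have := Finset.card_lt_card hss
            omega
          have h1t : (1:ℝ) ≤ 1 + t := by linarith
          calc (1+t) ^ (S ∩ K).card ≤ (1+t) ^ k' := pow_le_pow_right₀ h1t hm
            _ ≤ (1+t)^k - t^k := by
                have e1 : (1+t)^k = (1+t)^k' + t * (1+t)^k' := by rw [hk']; ring
                have e2 : t^k = t * t^k' := by rw [hk']; ring
                have e3 : t^k' ≤ (1+t)^k' := pow_le_pow_left₀ ht.le (by linarith) k'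
                nlinarith [pow_nonneg ht.le k']
      · have hprod0 : ∏ i ∈ S, (dJ i + t * dK i) = 0 := by
          obtain ⟨i, hiS, hiJ⟩ := Finset.not_disjoint_iff.mp hdisj
          refine Finset.prod_eq_zero hiS ?_
          have hiK : i ∉ K := Finset.disjoint_left.mp hJK hiJ
          simp [hdJ, hdK, hiJ, hiK]
        rw [hprod0, mul_zero, if_neg (fun hcon => hdisj hcon.2), zero_mul, zero_add]
        exact mul_nonneg (detSq_nonneg Z S) (by linarith)
    have hdiagx : Matrix.diagonal (fun i : Fin N => dJ i + t * dK i)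
        = Matrix.diagonal dJ + t • Matrix.diagonal dK := by
      ext i j
      by_cases hij : i = j
      · subst hij
        simp [Matrix.diagonal_apply_eq]
      · simp [Matrix.diagonal_apply_ne _ hij]
    have hid : Z * Matrix.diagonal (fun i : Fin N => dJ i + t * dK i) * Zᵀ
        = M + t • (U * Uᵀ) := by
      rw [hdiagx, Matrix.mul_add, Matrix.add_mul, Matrix.mul_smul, Matrix.smul_mul,
        hGK, hM, hC]
    have hdet2 : (M + t • (U * Uᵀ)).det
        = M.det * (t ^ k * (t⁻¹ • (1 : Matrix {i // i ∈ K} {i // i ∈ K} ℝ) + B).det) := by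
      have hfac : M + t • (U * Uᵀ) = M * (1 + (M⁻¹ * (t • U)) * Uᵀ) := by
        rw [Matrix.mul_add, Matrix.mul_one]
        congr 1
        refine (?_ : M * (M⁻¹ * (t • U) * Uᵀ) = t • (U * Uᵀ)).symm
        calc M * (M⁻¹ * (t • U) * Uᵀ) = (M * M⁻¹) * ((t • U) * Uᵀ) := by
              simp only [Matrix.mul_assoc]
          _ = (t • U) * Uᵀ := by rw [hMMinv, Matrix.one_mul]
          _ = t • (U * Uᵀ) := Matrix.smul_mul t U Uᵀ
      rw [hfac, Matrix.det_mul, Matrix.det_one_add_mul_comm]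
      have hUB : Uᵀ * (M⁻¹ * (t • U)) = t • B := by
        rw [Matrix.mul_smul, Matrix.mul_smul, ← Matrix.mul_assoc, ← hB]
      rw [hUB]
      have h2 : (1 : Matrix {i // i ∈ K} {i // i ∈ K} ℝ) + t • B = t • (t⁻¹ • 1 + B) := by
        rw [smul_add, smul_smul, mul_inv_cancel₀ ht.ne', one_smul]
      rw [h2, Matrix.det_smul, Fintype.card_coe]
    have hle : M.det * (t ^ k * (t⁻¹ • (1 : Matrix {i // i ∈ K} {i // i ∈ K} ℝ) + B).det)
        ≤ prDP Z {S | K ⊆ S ∧ Disjoint S J} * t ^ k + ((1+t)^k - t^k) := by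
      calc M.det * (t ^ k * (t⁻¹ • (1 : Matrix {i // i ∈ K} {i // i ∈ K} ℝ) + B).det)
          = (M + t • (U * Uᵀ)).det := hdet2.symm
        _ = ∑ S : Finset (Fin N), detSq Z S * ∏ i ∈ S, (dJ i + t * dK i) := by
            rw [← hid, det_weighted]
        _ ≤ ∑ S : Finset (Fin N), ((if K ⊆ S ∧ Disjoint S J then detSq Z S else 0) * t ^ k
              + detSq Z S * ((1+t)^k - t^k)) := Finset.sum_le_sum fun S _ => hterm S
        _ = prDP Z {S | K ⊆ S ∧ Disjoint S J} * t ^ k + ((1+t)^k - t^k) := by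
            rw [Finset.sum_add_distrib, ← Finset.sum_mul, ← Finset.sum_mul, hsum1,
              one_mul, ← hPT]
    have hdivk : ((1+t)^k - t^k) = ((1 + t⁻¹)^k - 1) * t ^ k := by
      have h1 : (1 + t⁻¹) * t = 1 + t := by
        rw [add_mul, one_mul, inv_mul_cancel₀ ht.ne']; ring
      rw [sub_mul, ← mul_pow, h1, one_mul]
    have h5 : (M.det * (t⁻¹ • (1 : Matrix {i // i ∈ K} {i // i ∈ K} ℝ) + B).det
          - ((1 + t⁻¹)^k - 1)) * t ^ k
        ≤ prDP Z {S | K ⊆ S ∧ Disjoint S J} * t ^ k := by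
      have heq : (M.det * (t⁻¹ • (1 : Matrix {i // i ∈ K} {i // i ∈ K} ℝ) + B).det
            - ((1 + t⁻¹)^k - 1)) * t ^ k
          = M.det * (t ^ k * (t⁻¹ • (1 : Matrix {i // i ∈ K} {i // i ∈ K} ℝ) + B).det)
            - ((1+t)^k - t^k) := by
        rw [hdivk]; ring
      rw [heq]
      linarith [hle]
    exact le_of_mul_le_mul_right h5 htpow
  have hlim2 : Filter.Tendsto
      (fun t : ℝ => M.det * (t⁻¹ • (1 : Matrix {i // i ∈ K} {i // i ∈ K} ℝ) + B).det
        - ((1 + t⁻¹) ^ k - 1))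
      Filter.atTop (nhds (M.det * B.det)) := by
    have hc : Continuous fun c : ℝ =>
        M.det * ((c • (1 : Matrix {i // i ∈ K} {i // i ∈ K} ℝ) + B)).det - ((1 + c)^k - 1) := by
      refine Continuous.sub ?_ ?_
      · exact continuous_const.mul
          (((continuous_id.smul continuous_const).add continuous_const).matrix_det)
      · exact ((continuous_const.add continuous_id).pow k).sub continuous_const
    have h0 := (hc.tendsto 0).comp tendsto_inv_atTop_zero
    simpa [Function.comp_def] using h0
  have hT_ge : M.det * B.det ≤ prDP Z {S | K ⊆ S ∧ Disjoint S J} :=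
    le_of_tendsto hlim2 (Filter.eventually_atTop.mpr
      ⟨1, fun t ht => hstep2 t (lt_of_lt_of_le zero_lt_one ht)⟩)
  -- final chain
  rw [hPJ]
  calc prDP Z {S | K ⊆ S} * M.det
      ≤ (Uᵀ * U).det * M.det := mul_le_mul_of_nonneg_right hPK_le hMdet_nonneg
    _ ≤ B.det * M.det := mul_le_mul_of_nonneg_right hdetB hMdet_nonneg
    _ = M.det * B.det := mul_comm _ _
    _ ≤ prDP Z {S | K ⊆ S ∧ Disjoint S J} := hT_ge
end

section
/- Let x₁,…,xₙ ∈ {1,…,N} be distinct points with 1 < n ≤ N − p, and let 𝔄 = {A ⊆ {1,…,N} : ∃ i, xᵢ ∈ A} be the increasing event generated by these simple points. Then (n + 1) · P({x₁,…,xₙ} ⊆ φᶜ) ≤ P({x₁,…,xₙ} ⊆ φᶜ)² + Σ_{i=1}^{n} P({x_j : j ≠ i} ⊆ φᶜ); equivalently, (n + 1) · P(φ ∉ 𝔄) ≤ P(φ ∉ 𝔄)² + Σ_{i=1}^{n} P(x_j ∉ φ for all j ≠ i). -/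
open Matrix

open Finset Equiv

private theorem my_cauchy_binet {R : Type*} [CommRing R] {p : ℕ} {ι : Type*} [Fintype ι]
    [LinearOrder ι] (A : Matrix (Fin p) ι R) (B : Matrix ι (Fin p) R) :
    det (A * B) = ∑ S : Finset ι, if h : S.card = p then
      det (A.submatrix id (fun j => (S.orderIsoOfFin h j : ι))) *
      det (B.submatrix (fun j => (S.orderIsoOfFin h j : ι)) id) else 0 := by
  classical
  have step1 : det (A * B)
      = ∑ f : Fin p → ι, (∏ i, B (f i) i) * det (A.submatrix id f) := by
    calc det (A * B)
        = ∑ f : Fin p → ι, ∑ σ : Equiv.Perm (Fin p),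
            ((Equiv.Perm.sign σ : ℤ) : R) * ∏ i, A (σ i) (f i) * B (f i) i := by
          simp only [det_apply', mul_apply, Finset.prod_univ_sum, Finset.mul_sum,
            Fintype.piFinset_univ]
          rw [Finset.sum_comm]
      _ = _ := by
          refine Finset.sum_congr rfl fun f _ => ?_
          rw [det_apply', Finset.mul_sum]
          refine Finset.sum_congr rfl fun σ _ => ?_
          simp only [Finset.prod_mul_distrib, submatrix_apply, id_eq]
          ring
  have step2 : det (A * B)
      = ∑ f ∈ Finset.univ.filter (fun f : Fin p → ι => Function.Injective f),
          (∏ i, B (f i) i) * det (A.submatrix id f) := by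
    rw [step1]
    symm
    apply Finset.sum_subset (Finset.filter_subset _ _)
    intro f _ hf
    simp only [Finset.mem_filter, Finset.mem_univ, true_and] at hf
    obtain ⟨i, j, hij, hne⟩ := Function.not_injective_iff.mp hf
    rw [Matrix.det_zero_of_column_eq hne (fun k => by simp [hij]), mul_zero]
  -- reindex injective functions by (S, τ)
  set F : (Fin p → ι) → R := fun f => (∏ i, B (f i) i) * det (A.submatrix id f) with hF
  set e : {S : Finset ι // S.card = p} × Equiv.Perm (Fin p) → (Fin p → ι) :=
    fun Sτ => fun i => (Sτ.1.1.orderIsoOfFin Sτ.1.2 (Sτ.2 i) : ι) with he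
  have hecoe : ∀ (S : {S : Finset ι // S.card = p}) (τ : Equiv.Perm (Fin p)) i,
      e (S, τ) i ∈ S.1 := fun S τ i => (S.1.orderIsoOfFin S.2 (τ i)).2
  have einj : ∀ Sτ, Function.Injective (e Sτ) := by
    rintro ⟨S, τ⟩ a b hab
    have := Subtype.coe_injective hab
    exact τ.injective ((S.1.orderIsoOfFin S.2).injective this)
  have step3 : ∑ f ∈ Finset.univ.filter (fun f : Fin p → ι => Function.Injective f), F f
      = ∑ Sτ : {S : Finset ι // S.card = p} × Equiv.Perm (Fin p), F (e Sτ) := by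
    symm
    refine Finset.sum_bij (fun Sτ _ => e Sτ) ?_ ?_ ?_ (fun _ _ => rfl)
    · intro Sτ _
      simp only [Finset.mem_filter, Finset.mem_univ, true_and]
      exact einj Sτ
    · rintro ⟨S, τ⟩ _ ⟨S', τ'⟩ _ hee
      have hee' : e (S, τ) = e (S', τ') := hee
      have hSS : S = S' := by
        apply Subtype.ext
        apply Finset.ext
        intro a
        constructor
        · intro ha
          have h1 : a = e (S, τ) (τ.symm ((S.1.orderIsoOfFin S.2).symm ⟨a, ha⟩)) := by
            simp only [he, Equiv.apply_symm_apply]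
            exact (congrArg Subtype.val ((S.1.orderIsoOfFin S.2).apply_symm_apply ⟨a, ha⟩)).symm
          rw [h1, hee']
          exact hecoe S' τ' _
        · intro ha
          have h1 : a = e (S', τ') (τ'.symm ((S'.1.orderIsoOfFin S'.2).symm ⟨a, ha⟩)) := by
            simp only [he, Equiv.apply_symm_apply]
            exact (congrArg Subtype.val
              ((S'.1.orderIsoOfFin S'.2).apply_symm_apply ⟨a, ha⟩)).symm
          rw [h1, ← hee']
          exact hecoe S τ _
      subst hSS
      have hττ : τ = τ' := by
        ext i
        have h2 : (S.1.orderIsoOfFin S.2 (τ i) : ι) = (S.1.orderIsoOfFin S.2 (τ' i) : ι) :=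
          congrFun hee' i
        exact Fin.val_eq_of_eq
          ((S.1.orderIsoOfFin S.2).injective (Subtype.coe_injective h2))
      rw [hττ]
    · intro f hf
      simp only [Finset.mem_filter, Finset.mem_univ, true_and] at hf
      have hcard : (Finset.univ.image f).card = p := by
        rw [Finset.card_image_of_injective _ hf, Finset.card_univ, Fintype.card_fin]
      have hmem : ∀ i, f i ∈ Finset.univ.image f := fun i =>
        Finset.mem_image_of_mem f (Finset.mem_univ i)
      set g : Fin p → Fin p := fun i =>
        ((Finset.univ.image f).orderIsoOfFin hcard).symm ⟨f i, hmem i⟩ with hg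
      have hginj : Function.Injective g := by
        intro a b hab
        apply hf
        have h3 := congrArg ((Finset.univ.image f).orderIsoOfFin hcard) hab
        simp only [hg, OrderIso.apply_symm_apply] at h3
        exact congrArg Subtype.val h3
      have hgbij : Function.Bijective g := (Finite.injective_iff_bijective).mp hginj
      refine ⟨(⟨Finset.univ.image f, hcard⟩, Equiv.ofBijective g hgbij), Finset.mem_univ _, ?_⟩
      funext i
      simp only [he, Equiv.ofBijective_apply, hg]
      simp
  have step4 : ∀ S : {S : Finset ι // S.card = p},
      ∑ τ : Equiv.Perm (Fin p), F (e (S, τ))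
        = det (A.submatrix id (fun j => (S.1.orderIsoOfFin S.2 j : ι))) *
          det (B.submatrix (fun j => (S.1.orderIsoOfFin S.2 j : ι)) id) := by
    intro S
    set g : Fin p → ι := fun j => (S.1.orderIsoOfFin S.2 j : ι) with hgdef
    have : ∀ τ : Equiv.Perm (Fin p), F (e (S, τ))
        = ((Equiv.Perm.sign τ : ℤ) : R) * (∏ i, (B.submatrix g id) (τ i) i)
          * det (A.submatrix id g) := by
      intro τ
      have h1 : A.submatrix id (e (S, τ)) = (A.submatrix id g).submatrix id τ := by
        ext a b; simp [he, hgdef]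
      have h2 : det (A.submatrix id (e (S, τ)))
          = ((Equiv.Perm.sign τ : ℤ) : R) * det (A.submatrix id g) := by
        rw [h1, det_permute']
      simp only [hF, h2]
      simp only [he, submatrix_apply, id_eq]
      ring
    rw [Finset.sum_congr rfl (fun τ _ => this τ)]
    rw [← Finset.sum_mul, mul_comm]
    congr 1
    rw [det_apply']
  have step5 : ∑ Sτ : {S : Finset ι // S.card = p} × Equiv.Perm (Fin p), F (e Sτ)
      = ∑ S : {S : Finset ι // S.card = p},
          det (A.submatrix id (fun j => (S.1.orderIsoOfFin S.2 j : ι))) *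
          det (B.submatrix (fun j => (S.1.orderIsoOfFin S.2 j : ι)) id) := by
    rw [Fintype.sum_prod_type]
    exact Finset.sum_congr rfl fun S _ => step4 S
  rw [step2, step3, step5]
  set D : Finset ι → R := fun S => if h : S.card = p then
      det (A.submatrix id (fun j => (S.orderIsoOfFin h j : ι))) *
      det (B.submatrix (fun j => (S.orderIsoOfFin h j : ι)) id) else 0 with hD
  calc ∑ S : {S : Finset ι // S.card = p},
        det (A.submatrix id (fun j => (S.1.orderIsoOfFin S.2 j : ι))) *
          det (B.submatrix (fun j => (S.1.orderIsoOfFin S.2 j : ι)) id)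
      = ∑ S : {S : Finset ι // S.card = p}, D S.1 := by
        refine Finset.sum_congr rfl fun S _ => ?_
        simp only [hD]
        rw [dif_pos S.2]
    _ = ∑ S ∈ Finset.univ.filter (fun S : Finset ι => S.card = p), D S :=
        (Finset.sum_subtype _ (by intro S; simp) D).symm
    _ = ∑ S : Finset ι, D S := by
        apply Finset.sum_filter_of_ne
        intro S _ hS
        by_contra hc
        refine hS ?_
        simp only [hD]
        exact dif_neg hc

private theorem my_det_add_vecMulVec {R : Type*} [CommRing R] {m : Type*} [DecidableEq m]
    [Fintype m] (A : Matrix m m R) (u v : m → R) :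
    det (A + vecMulVec u v) = det A + ∑ i, u i * det (A.updateRow i v) := by
  classical
  have hexp : det (A + vecMulVec u v)
      = ∑ s : Finset m, det (s.piecewise (fun i => u i • v) A) := by
    have h0 : A + vecMulVec u v = A + (Matrix.of fun i => u i • v) := by
      funext i j; simp [vecMulVec_apply]
    rw [h0, add_comm A]
    exact (Matrix.detRowAlternating (R := R) (n := m)).toMultilinearMap.map_add_univ
      (fun i => u i • v) A
  have hzero : ∀ s : Finset m, 2 ≤ s.card →
      det (s.piecewise (fun i => u i • v) A) = 0 := by
    intro s hs
    obtain ⟨i, hi, j, hj, hij⟩ := Finset.one_lt_card.mp hs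
    set M : Matrix m m R := s.piecewise (fun i => u i • v) A with hM
    have hMi : M i = u i • v := s.piecewise_eq_of_mem _ _ hi
    have hMj : M j = u j • v := s.piecewise_eq_of_mem _ _ hj
    have e1 : det M = u i * det (M.updateRow i v) := by
      conv_lhs => rw [← Matrix.updateRow_eq_self M i, hMi]
      rw [Matrix.det_updateRow_smul]
    have e2 : det (M.updateRow i v) = u j * det ((M.updateRow i v).updateRow j v) := by
      conv_lhs => rw [← Matrix.updateRow_eq_self (M.updateRow i v) j,
        Matrix.updateRow_ne (Ne.symm hij), hMj]
      rw [Matrix.det_updateRow_smul]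
    have e3 : det ((M.updateRow i v).updateRow j v) = 0 := by
      apply Matrix.det_zero_of_row_eq hij
      rw [Matrix.updateRow_ne hij, Matrix.updateRow_self, Matrix.updateRow_self]
    rw [e1, e2, e3, mul_zero, mul_zero]
  have hsub : ∑ s : Finset m, det (s.piecewise (fun i => u i • v) A)
      = ∑ s ∈ insert (∅ : Finset m) (Finset.univ.image fun i => ({i} : Finset m)),
          det (s.piecewise (fun i => u i • v) A) := by
    symm
    apply Finset.sum_subset (Finset.subset_univ _)
    intro s _ hs
    apply hzero
    simp only [Finset.mem_insert, Finset.mem_image, Finset.mem_univ, true_and] at hs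
    push_neg at hs
    rcases Nat.lt_or_ge s.card 2 with h | h
    · interval_cases h' : s.card
      · exact absurd (Finset.card_eq_zero.mp h') hs.1.ne_empty
      · obtain ⟨a, ha⟩ := Finset.card_eq_one.mp h'
        exact absurd ha.symm (by simpa using (hs.2 a))
    · exact h
  have hpe : (∅ : Finset m).piecewise (fun i => u i • v) A = A := Finset.piecewise_empty _ _
  rw [hexp, hsub, Finset.sum_insert (by simp), hpe,
    Finset.sum_image (by intro a _ b _ h; exact Finset.singleton_injective h)]
  congr 1
  refine Finset.sum_congr rfl fun i _ => ?_
  have hpiece : ({i} : Finset m).piecewise (fun i => u i • v) A = A.updateRow i (u i • v) := by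
    funext a b
    rcases eq_or_ne a i with rfl | ha
    · simp [Finset.piecewise]
    · simp [Finset.piecewise, ha, Matrix.updateRow_ne ha]
  rw [hpiece, Matrix.det_updateRow_smul]

private theorem my_det_add_vecMulVec_self {m : Type*} [DecidableEq m] [Fintype m]
    (A : Matrix m m ℝ) (c : m → ℝ) :
    det (A + vecMulVec c c) = det A + trace (adjugate A * vecMulVec c c) := by
  rw [my_det_add_vecMulVec]
  congr 1
  have hdet : ∀ i, det (A.updateRow i c) = ∑ k, adjugate A k i * c k := by
    intro i
    have h1 : det (A.updateRow i c) = det (Aᵀ.updateCol i c) := by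
      rw [Matrix.updateCol_transpose, Matrix.det_transpose]
    have h2 : Matrix.cramer Aᵀ c i = det (Aᵀ.updateCol i c) := Matrix.cramer_apply _ _ _
    have h3 : Matrix.cramer Aᵀ c = Matrix.adjugate Aᵀ *ᵥ c :=
      Matrix.cramer_eq_adjugate_mulVec _ _
    rw [h1, ← h2, h3, ← Matrix.adjugate_transpose]
    simp [Matrix.mulVec, dotProduct, Matrix.transpose_apply]
  simp only [hdet, Matrix.trace, Matrix.diag, Matrix.mul_apply, vecMulVec_apply]
  rw [Finset.sum_comm]
  apply Finset.sum_congr rfl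
  intro k _
  rw [Finset.mul_sum]
  apply Finset.sum_congr rfl
  intro l _
  ring

private theorem my_trace_adjugate {m : Type*} [Fintype m] [DecidableEq m]
    {G : Matrix m m ℝ} (hG : G.IsHermitian) :
    trace (adjugate G) = ∑ i, ∏ j ∈ Finset.univ.erase i, hG.eigenvalues j := by
  set U : Matrix m m ℝ := (hG.eigenvectorUnitary : Matrix m m ℝ) with hU
  have hGU : G = U * diagonal (RCLike.ofReal ∘ hG.eigenvalues) * star U := hG.spectral_theorem
  have hUU : star U * U = 1 := Matrix.mem_unitaryGroup_iff'.mp hG.eigenvectorUnitary.2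
  conv_lhs => rw [hGU]
  rw [Matrix.adjugate_mul_distrib, Matrix.adjugate_mul_distrib, Matrix.trace_mul_comm,
    Matrix.mul_assoc, ← Matrix.adjugate_mul_distrib, hUU, Matrix.adjugate_one, Matrix.mul_one,
    Matrix.adjugate_diagonal, Matrix.trace_diagonal]
  simp [Function.comp]

private theorem my_eig_le_one {m : Type*} [Fintype m] [DecidableEq m]
    {G : Matrix m m ℝ} (hG : G.IsHermitian) (h1 : (1 - G).PosSemidef) (i : m) :
    hG.eigenvalues i ≤ 1 := by
  set v : m → ℝ := ⇑(hG.eigenvectorBasis i) with hv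
  have hmv : G *ᵥ v = hG.eigenvalues i • v := hG.mulVec_eigenvectorBasis i
  have hnorm : v ⬝ᵥ v = 1 := by
    have h := hG.eigenvectorBasis.orthonormal.1 i
    have h2 : (inner ℝ (hG.eigenvectorBasis i) (hG.eigenvectorBasis i) : ℝ) = 1 := by
      rw [real_inner_self_eq_norm_mul_norm, h]; norm_num
    rw [← h2, PiLp.inner_apply]
    simp [dotProduct, hv, sq]
  have hps := h1.dotProduct_mulVec_nonneg v
  rw [sub_mulVec, one_mulVec, hmv] at hps
  have : star v = v := by funext j; simp
  rw [this, dotProduct_sub, dotProduct_smul, hnorm] at hps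
  simp only [smul_eq_mul, mul_one] at hps
  linarith

private theorem my_weierstrass {α : Type*} (s : Finset α) (μ : α → ℝ)
    (h0 : ∀ i, 0 ≤ μ i) (h1 : ∀ i, μ i ≤ 1) :
    1 - ∏ i ∈ s, μ i ≤ ∑ i ∈ s, (1 - μ i) := by
  classical
  induction s using Finset.induction with
  | empty => simp
  | @insert a s ha ih =>
    rw [Finset.prod_insert ha, Finset.sum_insert ha]
    have hps : ∏ i ∈ s, μ i ≤ 1 := Finset.prod_le_one (fun i _ => h0 i) (fun i _ => h1 i)
    have hps0 : (0 : ℝ) ≤ ∏ i ∈ s, μ i := Finset.prod_nonneg fun i _ => h0 i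
    nlinarith [h0 a, h1 a]

private theorem my_core {q n : ℕ} (G : Matrix (Fin q) (Fin q) ℝ)
    (hpsd : G.PosSemidef) (h1 : (1 - G).PosSemidef) (c : Fin n → Fin q → ℝ)
    (hc : ∑ i, vecMulVec (c i) (c i) = 1 - G) :
    ((n : ℝ) + 1) * det G ≤ det G ^ 2 + ∑ i, det (G + vecMulVec (c i) (c i)) := by
  classical
  set μ := hpsd.1.eigenvalues with hμ
  have hμ0 : ∀ i, 0 ≤ μ i := hpsd.eigenvalues_nonneg
  have hμ1 : ∀ i, μ i ≤ 1 := fun i => my_eig_le_one hpsd.1 h1 i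
  have hdet : det G = ∏ i, μ i := by
    simpa using hpsd.1.det_eq_prod_eigenvalues
  have htr : trace (adjugate G) = ∑ i, ∏ j ∈ Finset.univ.erase i, μ j := my_trace_adjugate hpsd.1
  have hsum : ∑ i, det (G + vecMulVec (c i) (c i))
      = n * det G + (trace (adjugate G) - q * det G) := by
    rw [Finset.sum_congr rfl (fun i _ => my_det_add_vecMulVec_self G (c i)),
      Finset.sum_add_distrib, ← Matrix.trace_sum, ← Matrix.mul_sum, hc]
    rw [Matrix.mul_sub, Matrix.mul_one, Matrix.trace_sub, Matrix.adjugate_mul,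
      Matrix.trace_smul, Matrix.trace_one]
    simp [Finset.sum_const, Finset.card_univ, nsmul_eq_mul, smul_eq_mul]
    ring
  have hP0 : (0 : ℝ) ≤ ∏ i, μ i := Finset.prod_nonneg fun i _ => hμ0 i
  have hkey : ((q : ℝ) + 1) * det G - det G ^ 2 ≤ trace (adjugate G) := by
    rw [htr, hdet]
    set P : ℝ := ∏ i, μ i with hPdef
    have herase : ∀ i : Fin q, μ i * ∏ j ∈ Finset.univ.erase i, μ j = P :=
      fun i => Finset.mul_prod_erase Finset.univ μ (Finset.mem_univ i)
    have herase0 : ∀ i : Fin q, (0 : ℝ) ≤ ∏ j ∈ Finset.univ.erase i, μ j :=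
      fun i => Finset.prod_nonneg fun j _ => hμ0 j
    have hPle : ∀ i : Fin q, P ≤ ∏ j ∈ Finset.univ.erase i, μ j := by
      intro i
      nlinarith [herase i, herase0 i, hμ1 i]
    have hsplit : ∀ i : Fin q, ∏ j ∈ Finset.univ.erase i, μ j
        = P + (∏ j ∈ Finset.univ.erase i, μ j) * (1 - μ i) := by
      intro i
      linear_combination herase i
    have hW : 1 - P ≤ ∑ i, (1 - μ i) := my_weierstrass Finset.univ μ hμ0 hμ1
    have hstep : ∑ i, P * (1 - μ i) ≤ ∑ i, (∏ j ∈ Finset.univ.erase i, μ j) * (1 - μ i) :=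
      Finset.sum_le_sum fun i _ =>
        mul_le_mul_of_nonneg_right (hPle i) (by linarith [hμ1 i])
    calc ((q : ℝ) + 1) * P - P ^ 2
        = q * P + P * (1 - P) := by push_cast; ring
      _ ≤ q * P + P * ∑ i, (1 - μ i) :=
          add_le_add_right (mul_le_mul_of_nonneg_left hW hP0) _
      _ = q * P + ∑ i, P * (1 - μ i) := by rw [Finset.mul_sum]
      _ ≤ q * P + ∑ i, (∏ j ∈ Finset.univ.erase i, μ j) * (1 - μ i) := add_le_add_right hstep _
      _ = ∑ i, (P + (∏ j ∈ Finset.univ.erase i, μ j) * (1 - μ i)) := by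
          rw [Finset.sum_add_distrib, Finset.sum_const, Finset.card_univ, Fintype.card_fin,
            nsmul_eq_mul]
      _ = ∑ i, ∏ j ∈ Finset.univ.erase i, μ j :=
          Finset.sum_congr rfl fun i _ => (hsplit i).symm
  linarith [hsum, hkey]

private theorem my_psd_mul_transpose {p N : ℕ} (A : Matrix (Fin p) (Fin N) ℝ) :
    (A * Aᵀ).PosSemidef := by
  have h := Matrix.posSemidef_self_mul_conjTranspose A
  rwa [Matrix.conjTranspose_eq_transpose_of_trivial] at h

private theorem my_prDP_compl {p N : ℕ} (Z : Matrix (Fin p) (Fin N) ℝ) (hZ : Z * Zᵀ = 1)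
    (T : Finset (Fin N)) :
    prDP Z {S | ∀ i ∈ T, i ∉ S}
      = det ((1 : Matrix (Fin p) (Fin p) ℝ)
          - (Matrix.of fun k j => if j ∈ T then Z k j else 0) *
            (Matrix.of fun k j => if j ∈ T then Z k j else 0)ᵀ) := by
  classical
  set Za : Matrix (Fin p) (Fin N) ℝ := Matrix.of fun k j => if j ∈ T then 0 else Z k j with hZa
  set Zc : Matrix (Fin p) (Fin N) ℝ := Matrix.of fun k j => if j ∈ T then Z k j else 0 with hZc
  have hsplit : Za * Zaᵀ + Zc * Zcᵀ = 1 := by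
    rw [← hZ]
    ext k l
    simp only [Matrix.add_apply, Matrix.mul_apply, Matrix.transpose_apply, Matrix.of_apply,
      hZa, hZc]
    rw [← Finset.sum_add_distrib]
    apply Finset.sum_congr rfl
    intro j _
    by_cases hj : j ∈ T <;> simp [hj]
  have h1 : (1 : Matrix (Fin p) (Fin p) ℝ) - Zc * Zcᵀ = Za * Zaᵀ := by
    rw [← hsplit, add_sub_cancel_right]
  rw [h1, my_cauchy_binet]
  unfold prDP
  apply Finset.sum_congr rfl
  intro S _
  by_cases hcard : S.card = p
  · by_cases hST : S ∈ {S : Finset (Fin N) | ∀ i ∈ T, i ∉ S}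
    · rw [if_pos hST, dif_pos hcard]
      have hnotT : ∀ b : Fin p, (S.orderIsoOfFin hcard b : Fin N) ∉ T := fun b hb =>
        (hST _ hb) (S.orderIsoOfFin hcard b).2
      have hnotT' : ∀ b : Fin p, S.orderEmbOfFin hcard b ∉ T := hnotT
      have hA : Za.submatrix id (fun j => (S.orderIsoOfFin hcard j : Fin N))
          = Matrix.of fun a (b : Fin p) => Z a ((S.orderIsoOfFin hcard b : Fin N)) := by
        ext a b
        simp [hZa, Matrix.submatrix_apply, hnotT' b]
      have hB : Zaᵀ.submatrix (fun j => (S.orderIsoOfFin hcard j : Fin N)) id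
          = (Matrix.of fun a (b : Fin p) => Z a ((S.orderIsoOfFin hcard b : Fin N)))ᵀ := by
        ext a b
        simp [hZa, Matrix.submatrix_apply, Matrix.transpose_apply, hnotT' a]
      rw [hA, hB, Matrix.det_transpose]
      unfold detSq
      rw [dif_pos hcard, sq]
    · rw [if_neg hST, dif_pos hcard]
      have hex : ∃ i ∈ T, i ∈ S := by
        by_contra hno
        push_neg at hno
        exact hST hno
      obtain ⟨i, hiT, hiS⟩ := hex
      set b : Fin p := (S.orderIsoOfFin hcard).symm ⟨i, hiS⟩ with hb
      have hcol : ∀ a : Fin p,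
          (Za.submatrix id (fun j => (S.orderIsoOfFin hcard j : Fin N))) a b = 0 := by
        intro a
        have hgb : (S.orderIsoOfFin hcard b : Fin N) = i := by
          rw [hb]
          exact congrArg Subtype.val ((S.orderIsoOfFin hcard).apply_symm_apply ⟨i, hiS⟩)
        have hgb' : S.orderEmbOfFin hcard b = i := hgb
        simp [hZa, Matrix.submatrix_apply, hgb', hiT]
      rw [Matrix.det_eq_zero_of_column_eq_zero b hcol, zero_mul]
  · rw [dif_neg hcard]
    have : detSq Z S = 0 := by unfold detSq; rw [dif_neg hcard]
    simp [this]

/-- inequality (B8)/(B9): for the increasing event generated by distinct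
simple points x₁,…,xₙ with 1 < n ≤ N − p,
(n + 1) · P(φ ∉ 𝔄) ≤ P(φ ∉ 𝔄)² + Σᵢ P(x_j ∉ φ ∀ j ≠ i), where
P(φ ∉ 𝔄) = P({x₁,…,xₙ} ⊆ φᶜ). -/
theorem key_inequality_simple_points {N p n : ℕ} (hp : 1 < p) (hpN : p < N)
    (Z : Matrix (Fin p) (Fin N) ℝ) (hZ : Z * Zᵀ = 1)
    (x : Fin n → Fin N) (hx : Function.Injective x)
    (hn : 1 < n) (hnNp : n ≤ N - p) :
    ((n : ℝ) + 1) * prDP Z {S | ∀ i : Fin n, x i ∉ S}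
      ≤ prDP Z {S | ∀ i : Fin n, x i ∉ S} ^ 2
        + ∑ i : Fin n, prDP Z {S | ∀ j : Fin n, j ≠ i → x j ∉ S} := by
  classical
  set Zc : Finset (Fin N) → Matrix (Fin p) (Fin N) ℝ :=
    fun T => Matrix.of fun k j => if j ∈ T then Z k j else 0 with hZcdef
  set M : Finset (Fin N) → Matrix (Fin p) (Fin p) ℝ := fun T => Zc T * (Zc T)ᵀ with hMdef
  have hMapp : ∀ T k l, M T k l = ∑ j ∈ T, Z k j * Z l j := by
    intro T k l
    simp only [hMdef, hZcdef, Matrix.mul_apply, Matrix.transpose_apply, Matrix.of_apply]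
    have hite : ∀ j : Fin N, (if j ∈ T then Z k j else 0) * (if j ∈ T then Z l j else 0)
        = if j ∈ T then Z k j * Z l j else 0 := by
      intro j; by_cases hj : j ∈ T <;> simp [hj]
    rw [Finset.sum_congr rfl fun j _ => hite j, Finset.sum_ite_mem, Finset.univ_inter]
  set T0 : Finset (Fin N) := Finset.image x Finset.univ with hT0
  set Ti : Fin n → Finset (Fin N) := fun i => Finset.image x (Finset.univ.erase i) with hTi
  set c : Fin n → Fin p → ℝ := fun i k => Z k (x i) with hcdef
  set G : Matrix (Fin p) (Fin p) ℝ := 1 - M T0 with hG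
  -- prDP identities
  have hE0 : {S : Finset (Fin N) | ∀ i : Fin n, x i ∉ S}
      = {S : Finset (Fin N) | ∀ t ∈ T0, t ∉ S} := by
    ext S
    simp [hT0]
  have hEi : ∀ i : Fin n, {S : Finset (Fin N) | ∀ j : Fin n, j ≠ i → x j ∉ S}
      = {S : Finset (Fin N) | ∀ t ∈ Ti i, t ∉ S} := by
    intro i
    ext S
    simp only [Set.mem_setOf_eq, hTi, Finset.mem_image, Finset.mem_erase, Finset.mem_univ,
      and_true]
    constructor
    · rintro h t ⟨j, hj, rfl⟩
      exact h j hj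
    · intro h j hj
      exact h (x j) ⟨j, hj, rfl⟩
  have hpr0 : prDP Z {S | ∀ i : Fin n, x i ∉ S} = det G := by
    rw [hE0, my_prDP_compl Z hZ T0]
  have hpri : ∀ i : Fin n, prDP Z {S | ∀ j : Fin n, j ≠ i → x j ∉ S}
      = det (G + vecMulVec (c i) (c i)) := by
    intro i
    rw [hEi i, my_prDP_compl Z hZ (Ti i)]
    congr 1
    have hxi : x i ∉ Ti i := by
      simp only [hTi, Finset.mem_image, Finset.mem_erase, Finset.mem_univ, and_true, not_exists]
      rintro j ⟨hj, hxj⟩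
      exact hj (hx hxj)
    have hins : T0 = insert (x i) (Ti i) := by
      rw [hT0, hTi, ← Finset.image_insert, Finset.insert_erase (Finset.mem_univ i)]
    have hMM : M T0 = vecMulVec (c i) (c i) + M (Ti i) := by
      ext k l
      rw [Matrix.add_apply, hMapp, hMapp, hins, Finset.sum_insert hxi]
      simp [vecMulVec_apply, hcdef]
    show (1 : Matrix (Fin p) (Fin p) ℝ) - M (Ti i) = G + vecMulVec (c i) (c i)
    rw [hG, hMM]
    abel
  -- positivity
  have hZaid : (Matrix.of fun k j => if j ∈ T0 then 0 else Z k j) *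
        (Matrix.of fun k j => if j ∈ T0 then 0 else Z k j)ᵀ + M T0 = 1 := by
    rw [← hZ]
    ext k l
    simp only [Matrix.add_apply, Matrix.mul_apply, Matrix.transpose_apply, Matrix.of_apply,
      hMdef, hZcdef]
    rw [← Finset.sum_add_distrib]
    apply Finset.sum_congr rfl
    intro j _
    by_cases hj : j ∈ T0 <;> simp [hj]
  have hGpsd : G.PosSemidef := by
    have hGeq : G = (Matrix.of fun k j => if j ∈ T0 then 0 else Z k j) *
        (Matrix.of fun k j => if j ∈ T0 then 0 else Z k j)ᵀ := by
      rw [hG, ← hZaid, add_sub_cancel_right]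
    rw [hGeq]
    exact my_psd_mul_transpose _
  have hG1psd : ((1 : Matrix (Fin p) (Fin p) ℝ) - G).PosSemidef := by
    have : (1 : Matrix (Fin p) (Fin p) ℝ) - G = M T0 := by rw [hG, sub_sub_cancel]
    rw [this, hMdef]
    exact my_psd_mul_transpose _
  have hc : ∑ i, vecMulVec (c i) (c i) = 1 - G := by
    have : (1 : Matrix (Fin p) (Fin p) ℝ) - G = M T0 := by rw [hG, sub_sub_cancel]
    rw [this]
    ext k l
    rw [hMapp, hT0, Finset.sum_image (fun a _ b _ h => hx h)]
    simp only [Matrix.sum_apply, vecMulVec_apply, hcdef]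
  rw [hpr0, Finset.sum_congr rfl (fun i _ => hpri i)]
  exact my_core G hGpsd hG1psd c hc
end
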